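/- arXiv:math/0609111 — 2 statements merged into one kernel-verified Lean document; each statement's English description precedes it below -/
import Mathlib

section
/- Let G be a connected graph, x an eigenvector for the smallest adjacency eigenvalue μ_min(G), V₁ = {u : x_u < 0}, and H the spanning subgraph of G consisting of all edges with exactly one endpoint in V₁. Then μ_min(H) ≤ μ_min(G), and H is bipartite so μ_min(H) = −μ(H). -/
open Classical in
noncomputable def adjMat {V : Type*} [Fintype V] (G : SimpleGraph V) :
    Matrix V V ℝ :=
  Matrix.of fun i j => if G.Adj i j then 1 else 0

def IsAdjEigenvalue {V : Type*} [Fintype V] (A : Matrix V V ℝ) (μ : ℝ) : Prop :=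
  ∃ x : V → ℝ, x ≠ 0 ∧ A.mulVec x = μ • x

def IsMaxAdjEigenvalue {V : Type*} [Fintype V] (A : Matrix V V ℝ) (μ : ℝ) : Prop :=
  IsAdjEigenvalue A μ ∧ ∀ ν, IsAdjEigenvalue A ν → ν ≤ μ

def IsMinAdjEigenvalue {V : Type*} [Fintype V] (A : Matrix V V ℝ) (μ : ℝ) : Prop :=
  IsAdjEigenvalue A μ ∧ ∀ ν, IsAdjEigenvalue A ν → μ ≤ ν

/-- The spanning subgraph of `G` keeping exactly the edges with one endpoint
where `x` is negative and the other where `x` is nonnegative. -/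
def crossSub {n : ℕ} (G : SimpleGraph (Fin n)) (x : Fin n → ℝ) : SimpleGraph (Fin n) where
  Adj a b := G.Adj a b ∧ ¬ ((x a < 0) ↔ (x b < 0))
  symm := by
    constructor
    intro a b h
    exact ⟨h.1.symm, fun hi => h.2 hi.symm⟩
  loopless := by
    constructor
    intro a h
    exact G.irrefl h.1

/-! Since `x` is a `ν`-eigenvector of `G`, `xᵀ A_G x = ν ‖x‖²`. An edge of `G` missing from `H`
joins two entries of `x` of the same sign, so it contributes a nonnegative term `2 xᵢ xⱼ` to the
quadratic form; hence `xᵀ A_H x ≤ ν ‖x‖²`, and the Rayleigh bound `νH ‖x‖² ≤ xᵀ A_H x` gives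
`νH ≤ ν`. The sign of `x` is a proper 2-colouring of `H`, and flipping the sign of an eigenvector on
one colour class turns a `μ`-eigenvector into a `-μ`-eigenvector, so the spectrum of `H` is
symmetric about `0` and `νH = -μH`. -/

open Matrix

section

variable {V : Type*} [Fintype V]

lemma Matrix.IsHermitian.isAdjEigenvalue_eigenvalues [DecidableEq V] {A : Matrix V V ℝ}
    (hA : A.IsHermitian) (i : V) : IsAdjEigenvalue A (hA.eigenvalues i) :=
  ⟨_, (WithLp.ofLp_eq_zero 2).ne.2 <| hA.eigenvectorBasis.orthonormal.ne_zero i,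
    hA.mulVec_eigenvectorBasis i⟩

lemma mul_dotProduct_self_le_of_forall_le {A : Matrix V V ℝ} (hA : A.IsHermitian) {ν : ℝ}
    (hν : ∀ μ, IsAdjEigenvalue A μ → ν ≤ μ) (y : V → ℝ) :
    ν * (y ⬝ᵥ y) ≤ y ⬝ᵥ (A *ᵥ y) := by
  classical
  have hB : (A - ν • 1).IsHermitian := hA.sub (isHermitian_one.smul (.all ν))
  have hBmulVec : ∀ v, (A - ν • 1) *ᵥ v = A *ᵥ v - ν • v := fun v => by
    rw [sub_mulVec, smul_mulVec, one_mulVec]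
  have hpsd : (A - ν • 1).PosSemidef := hB.posSemidef_iff_eigenvalues_nonneg.mpr fun i => by
    rw [Pi.zero_apply]
    obtain ⟨v, hv0, hv⟩ := hB.isAdjEigenvalue_eigenvalues i
    rw [hBmulVec, sub_eq_iff_eq_add, ← add_smul] at hv
    linarith [hν _ ⟨v, hv0, hv⟩]
  have := hpsd.dotProduct_mulVec_nonneg y
  rw [hBmulVec, dotProduct_sub, dotProduct_smul, star_trivial, smul_eq_mul] at this
  linarith

lemma adjMat_isHermitian (G : SimpleGraph V) : (adjMat G).IsHermitian := by
  ext i j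
  simp only [adjMat, conjTranspose_apply, of_apply, star_trivial]
  rw [G.adj_comm]

lemma dotProduct_adjMat_mulVec_le_of_le {H G : SimpleGraph V} (hHG : H ≤ G) (y : V → ℝ)
    (hy : ∀ i j, G.Adj i j → ¬ H.Adj i j → 0 ≤ y i * y j) :
    y ⬝ᵥ (adjMat H *ᵥ y) ≤ y ⬝ᵥ (adjMat G *ᵥ y) := by
  simp only [dotProduct, mulVec, adjMat, of_apply, Finset.mul_sum]
  refine Finset.sum_le_sum fun i _ => Finset.sum_le_sum fun j _ => ?_
  by_cases hH : H.Adj i j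
  · simp [hH, hHG hH]
  · by_cases hG : G.Adj i j
    · simpa [hH, hG, mul_left_comm] using hy i j hG hH
    · simp [hH, hG]

lemma adjMat_mulVec_mul_eq_neg_of_adj {H : SimpleGraph V} {s : V → ℝ}
    (hs : ∀ i j, H.Adj i j → s j = -s i) (y : V → ℝ) :
    adjMat H *ᵥ (s * y) = -(s * (adjMat H *ᵥ y)) := by
  ext i
  simp only [mulVec, dotProduct, Pi.mul_apply, Pi.neg_apply, Finset.mul_sum,
    ← Finset.sum_neg_distrib]
  refine Finset.sum_congr rfl fun j _ => ?_
  by_cases hij : H.Adj i j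
  · simp [adjMat, hij, hs i j hij]
  · simp [adjMat, hij]

lemma isAdjEigenvalue_neg_of_colorable_two {H : SimpleGraph V} (hH : H.Colorable 2) {μ : ℝ}
    (hμ : IsAdjEigenvalue (adjMat H) μ) : IsAdjEigenvalue (adjMat H) (-μ) := by
  obtain ⟨c⟩ := hH
  obtain ⟨y, hy0, hy⟩ := hμ
  set s : V → ℝ := fun v => (-1) ^ (c v : ℕ)
  have hs : ∀ i j, H.Adj i j → s j = -s i := by
    intro i j hij
    have := c.valid hij
    simp only [s]
    generalize c i = a, c j = b at this
    fin_cases a <;> fin_cases b <;> simp_all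
  refine ⟨s * y, fun h => hy0 ?_, ?_⟩
  · ext v
    simpa [s] using congrFun h v
  · rw [adjMat_mulVec_mul_eq_neg_of_adj hs, hy, neg_smul, mul_smul_comm]

lemma IsMinAdjEigenvalue.eq_neg_of_colorable_two {H : SimpleGraph V} (hH : H.Colorable 2)
    {ν μ : ℝ} (hmin : IsMinAdjEigenvalue (adjMat H) ν) (hmax : IsMaxAdjEigenvalue (adjMat H) μ) :
    ν = -μ := by
  have h₁ := hmin.2 _ (isAdjEigenvalue_neg_of_colorable_two hH hmax.1)
  have h₂ := hmax.2 _ (isAdjEigenvalue_neg_of_colorable_two hH hmin.1)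
  linarith

end

lemma crossSub_le {n : ℕ} (G : SimpleGraph (Fin n)) (x : Fin n → ℝ) : crossSub G x ≤ G :=
  fun _ _ h => h.1

lemma crossSub_colorable_two {n : ℕ} (G : SimpleGraph (Fin n)) (x : Fin n → ℝ) :
    (crossSub G x).Colorable 2 :=
  ⟨.mk (fun v => if x v < 0 then 0 else 1) fun {a b} hab => by
    have := hab.2
    split_ifs <;> simp_all⟩

lemma mul_nonneg_of_adj_of_not_adj_crossSub {n : ℕ} {G : SimpleGraph (Fin n)} {x : Fin n → ℝ}
    {i j : Fin n} (hG : G.Adj i j) (hH : ¬ (crossSub G x).Adj i j) : 0 ≤ x i * x j := by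
  have hsign : x i < 0 ↔ x j < 0 := not_not.mp fun h => hH ⟨hG, h⟩
  rcases lt_or_ge (x i) 0 with hi | hi
  · exact mul_nonneg_of_nonpos_of_nonpos hi.le (hsign.mp hi).le
  · exact mul_nonneg hi (not_lt.mp fun hj => (hsign.mpr hj).not_ge hi)

theorem stmt10_general {n : ℕ} (G : SimpleGraph (Fin n))
    (ν : ℝ)
    (x : Fin n → ℝ) (hx : x ≠ 0) (heig : (adjMat G).mulVec x = ν • x)
    (νH μH : ℝ) (hminH : IsMinAdjEigenvalue (adjMat (crossSub G x)) νH)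
    (hmaxH : IsMaxAdjEigenvalue (adjMat (crossSub G x)) μH) :
    νH ≤ ν ∧ (crossSub G x).Colorable 2 ∧ νH = -μH := by
  have hbip := crossSub_colorable_two G x
  refine ⟨?_, hbip, hminH.eq_neg_of_colorable_two hbip hmaxH⟩
  have hcut : x ⬝ᵥ (adjMat (crossSub G x) *ᵥ x) ≤ x ⬝ᵥ (adjMat G *ᵥ x) :=
    dotProduct_adjMat_mulVec_le_of_le (crossSub_le G x) x
      fun _ _ => mul_nonneg_of_adj_of_not_adj_crossSub
  have hrayleigh := mul_dotProduct_self_le_of_forall_le (adjMat_isHermitian _) hminH.2 x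
  rw [heig, dotProduct_smul, smul_eq_mul] at hcut
  have hxx : 0 < x ⬝ᵥ x := by simpa using dotProduct_star_self_pos_iff.mpr hx
  exact le_of_mul_le_mul_right (hrayleigh.trans hcut) hxx

theorem stmt10 {n : ℕ} (G : SimpleGraph (Fin n)) (hG : G.Connected)
    (ν : ℝ) (hmin : IsMinAdjEigenvalue (adjMat G) ν)
    (x : Fin n → ℝ) (hx : x ≠ 0) (heig : (adjMat G).mulVec x = ν • x)
    (νH μH : ℝ) (hminH : IsMinAdjEigenvalue (adjMat (crossSub G x)) νH)
    (hmaxH : IsMaxAdjEigenvalue (adjMat (crossSub G x)) μH) :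
    νH ≤ ν ∧ (crossSub G x).Colorable 2 ∧ νH = -μH :=
  stmt10_general G ν x hx heig νH μH hminH hmaxH
end

section
/- If H is a proper subgraph of a connected r-regular graph G of order n and diameter D, then μ(G) − μ(H) > 1/(n(D+1)), where μ denotes the largest adjacency eigenvalue (so μ(G) = r). -/
/-! Let `x` be an eigenvector of `H` for `μ(H)` and `y = |x|`. As `G` is `r`-regular and some edge
`ab` of `G` is missing from `H`, `(r - μ(H)) ‖y‖² ≥ L(y) + 2 y_a y_b`, where
`L(y) = ∑_{uv ∈ E(G)} (y_u - y_v)²` is the Laplacian form of `G`. Let `y` be maximal at `w` and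
let `s` be the smaller of `y_a`, `y_b`. Cauchy–Schwarz along a shortest path from `w` gives
`(y_w - s)² ≤ D L(y)`, and minimising `L(y) + 2 s²` under this constraint yields
`L(y) + 2 y_a y_b ≥ 2 y_w² / (2D + 1)`. Since `‖y‖² ≤ n y_w²`, this gives
`r - μ(H) ≥ 2 / (n (2D + 1)) > 1 / (n (D + 1))`, while `μ(G) ≥ r` via the all-ones vector. -/

open Finset Matrix SimpleGraph

lemma adjMat_eq_adjMatrix {V : Type*} [Fintype V] (G : SimpleGraph V) [DecidableRel G.Adj] :
    adjMat G = G.adjMatrix ℝ := by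
  ext i j
  simp [adjMat, adjMatrix_apply]

lemma isAdjEigenvalue_adjMat_of_isRegularOfDegree {V : Type*} [Fintype V] [Nonempty V]
    {G : SimpleGraph V} [DecidableRel G.Adj] {r : ℕ} (hreg : G.IsRegularOfDegree r) :
    IsAdjEigenvalue (adjMat G) r := by
  refine ⟨Function.const V 1, Function.const_ne_zero.mpr one_ne_zero, ?_⟩
  ext v
  simp [adjMat_eq_adjMatrix, hreg v]

lemma Matrix.mul_dotProduct_abs_le {V : Type*} [Fintype V] {A : Matrix V V ℝ}
    (hA : ∀ i j, 0 ≤ A i j) {μ : ℝ} {x : V → ℝ} (hx : A *ᵥ x = μ • x) :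
    μ * (|x| ⬝ᵥ |x|) ≤ |x| ⬝ᵥ (A *ᵥ |x|) :=
  calc μ * (|x| ⬝ᵥ |x|) = x ⬝ᵥ (A *ᵥ x) := by
        simp [hx, dotProduct, mul_sum, abs_mul_abs_self, mul_left_comm]
    _ ≤ |x| ⬝ᵥ (A *ᵥ |x|) := by
        simp only [dotProduct, mulVec, mul_sum, Pi.abs_apply]
        refine sum_le_sum fun i _ => sum_le_sum fun j _ => ?_
        calc x i * (A i j * x j) ≤ |x i * (A i j * x j)| := le_abs_self _
          _ = |x i| * (A i j * |x j|) := by rw [abs_mul, abs_mul, abs_of_nonneg (hA i j)]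

lemma dotProduct_self_le_card_mul_sq {V : Type*} [Fintype V] {y : V → ℝ} (hy : 0 ≤ y)
    {m : ℝ} (hm : ∀ i, y i ≤ m) : y ⬝ᵥ y ≤ Fintype.card V * m ^ 2 :=
  calc y ⬝ᵥ y ≤ ∑ _i : V, m ^ 2 :=
        sum_le_sum fun i _ => by rw [sq]; exact mul_self_le_mul_self (hy i) (hm i)
    _ = Fintype.card V * m ^ 2 := by simp

lemma two_mul_sq_le_of_sq_sub_le {D E p s m : ℝ} (hD : 0 < D) (hs : s ^ 2 ≤ p)
    (hm : (m - s) ^ 2 ≤ D * E) : 2 * m ^ 2 ≤ (2 * D + 1) * (E + 2 * p) := by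
  -- `D (2D+1) (E + 2p) ≥ (2D+1) (m-s)² + 2D (2D+1) s² = 2D m² + (m - (2D+1) s)²`
  refine le_of_mul_le_mul_left ?_ hD
  nlinarith [sq_nonneg (m - (2 * D + 1) * s),
    mul_le_mul_of_nonneg_left hm (by positivity : (0 : ℝ) ≤ 2 * D + 1),
    mul_le_mul_of_nonneg_left hs (by positivity : (0 : ℝ) ≤ 2 * D * (2 * D + 1))]

lemma one_div_lt_of_two_mul_le {n D δ S M : ℝ} (hn : 0 < n) (hD : 0 ≤ D) (hM : 0 < M)
    (hS : 0 ≤ S) (hSn : S ≤ n * M) (h : 2 * M ≤ (2 * D + 1) * (δ * S)) :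
    1 / (n * (D + 1)) < δ := by
  have hδS : 0 < δ * S :=
    pos_of_mul_pos_right (by linarith) (by linarith : (0 : ℝ) ≤ 2 * D + 1)
  have hδ : 0 < δ := pos_of_mul_pos_left hδS hS
  have : 2 ≤ (2 * D + 1) * δ * n := by
    refine le_of_mul_le_mul_right ?_ hM
    nlinarith [mul_le_mul_of_nonneg_left hSn (by positivity : 0 ≤ (2 * D + 1) * δ)]
  rw [div_lt_iff₀ (by positivity)]
  nlinarith [mul_pos hδ hn]

namespace SimpleGraph

variable {V : Type*}

lemma adjMatrix_eq_add_sdiff {α : Type*} [AddMonoidWithOne α] {G H : SimpleGraph V}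
    [DecidableRel G.Adj] [DecidableRel H.Adj] [DecidableRel (G \ H).Adj] (h : H ≤ G) :
    G.adjMatrix α = H.adjMatrix α + (G \ H).adjMatrix α := by
  ext i j
  by_cases hH : H.Adj i j
  · simp [hH, h hH]
  · by_cases hG : G.Adj i j <;> simp [hH, hG]

variable [Fintype V]

lemma two_mul_le_dotProduct_adjMatrix_mulVec {K : SimpleGraph V} [DecidableRel K.Adj]
    {y : V → ℝ} (hy : 0 ≤ y) {a b : V} (hab : K.Adj a b) :
    2 * (y a * y b) ≤ y ⬝ᵥ (K.adjMatrix ℝ *ᵥ y) := by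
  classical
  let F : V × V → ℝ := fun z => if K.Adj z.1 z.2 then y z.1 * y z.2 else 0
  have hF : ∀ z, 0 ≤ F z := fun z => by
    unfold F; split_ifs <;> first | positivity | exact mul_nonneg (hy _) (hy _)
  calc 2 * (y a * y b) = ∑ z ∈ {(a, b), (b, a)}, F z := by
        rw [sum_pair (by simp [hab.ne])]
        simp [F, hab, hab.symm]; ring
    _ ≤ ∑ z, F z := sum_le_univ_sum_of_nonneg hF
    _ = y ⬝ᵥ (K.adjMatrix ℝ *ᵥ y) := by
        rw [dotProduct_mulVec_adjMatrix, Fintype.sum_prod_type]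

variable [DecidableEq V] {G : SimpleGraph V} [DecidableRel G.Adj]

lemma dotProduct_adjMatrix_mulVec_of_isRegularOfDegree {r : ℕ} (hreg : G.IsRegularOfDegree r)
    (y : V → ℝ) :
    y ⬝ᵥ (G.adjMatrix ℝ *ᵥ y) = r * (y ⬝ᵥ y) - y ⬝ᵥ (G.lapMatrix ℝ *ᵥ y) := by
  rw [lapMatrix, sub_mulVec, dotProduct_sub, dotProduct_mulVec_degMatrix]
  simp only [hreg _, dotProduct, mul_sum]
  ring_nf

lemma IsRegularOfDegree.dotProduct_lapMatrix_abs_add_le {r : ℕ} (hreg : G.IsRegularOfDegree r)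
    {H : SimpleGraph V} [DecidableRel H.Adj] (hHG : H ≤ G) {a b : V} (hab : G.Adj a b)
    (hnab : ¬H.Adj a b) {μ : ℝ} {x : V → ℝ} (hx : H.adjMatrix ℝ *ᵥ x = μ • x) :
    |x| ⬝ᵥ (G.lapMatrix ℝ *ᵥ |x|) + 2 * (|x| a * |x| b) ≤
      (r - μ) * (|x| ⬝ᵥ |x|) := by
  classical
  have hH := mul_dotProduct_abs_le (fun i j => by by_cases h : H.Adj i j <;> simp [h]) hx
  have hGH := congrArg (|x| ⬝ᵥ · *ᵥ |x|) (adjMatrix_eq_add_sdiff (α := ℝ) hHG)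
  have hedge := two_mul_le_dotProduct_adjMatrix_mulVec (abs_nonneg x)
    (show (G \ H).Adj a b from ⟨hab, hnab⟩)
  simp only [add_mulVec, dotProduct_add, dotProduct_adjMatrix_mulVec_of_isRegularOfDegree hreg]
    at hGH
  linarith

lemma Walk.IsPath.sum_getVert_le_sum_adj {u v : V} {p : G.Walk u v} (hp : p.IsPath)
    (F : V → V → ℝ) (hF : ∀ i j, 0 ≤ F i j) :
    ∑ i ∈ range p.length,
        (F (p.getVert i) (p.getVert (i + 1)) + F (p.getVert (i + 1)) (p.getVert i)) ≤
      ∑ i, ∑ j, if G.Adj i j then F i j else 0 := by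
  let e : ℕ × Bool → V × V := fun ib =>
    if ib.2 then (p.getVert ib.1, p.getVert (ib.1 + 1)) else (p.getVert (ib.1 + 1), p.getVert ib.1)
  let Fadj : V × V → ℝ := fun z => if G.Adj z.1 z.2 then F z.1 z.2 else 0
  have he : Set.InjOn e (range p.length ×ˢ univ : Finset (ℕ × Bool)) := by
    rintro ⟨i, b⟩ hi ⟨j, c⟩ hj h
    simp only [coe_product, coe_range, coe_univ, Set.mem_prod, Set.mem_Iio, Set.mem_univ,
      and_true] at hi hj
    have inj {k l : ℕ} (hk : k ≤ p.length) (hl : l ≤ p.length)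
        (h : p.getVert k = p.getVert l) : k = l :=
      hp.getVert_injOn hk hl h
    cases b <;> cases c <;> simp only [e, Prod.ext_iff] at h <;> simp only [Bool.false_eq_true,
      if_true, if_false] at h <;>
    · have h₁ := inj (by omega) (by omega) h.1
      have h₂ := inj (by omega) (by omega) h.2
      simp only [Prod.mk.injEq, Bool.false_eq_true, Bool.true_eq_false, and_true, and_false]
      omega
  calc _ = ∑ ib ∈ range p.length ×ˢ univ, Fadj (e ib) := by
        rw [sum_product]
        refine sum_congr rfl fun i hi => ?_
        have hadj := p.adj_getVert_succ (mem_range.mp hi)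
        simp [e, Fadj, hadj, hadj.symm]
    _ = ∑ z ∈ (range p.length ×ˢ univ).image e, Fadj z := (sum_image he).symm
    _ ≤ ∑ z, Fadj z := sum_le_univ_sum_of_nonneg fun z => by
        unfold Fadj; split_ifs <;> simp [hF]
    _ = _ := Fintype.sum_prod_type _

lemma Walk.IsPath.sq_sub_le_length_mul {u v : V} {p : G.Walk u v} (hp : p.IsPath) (y : V → ℝ) :
    (y u - y v) ^ 2 ≤ p.length * (y ⬝ᵥ (G.lapMatrix ℝ *ᵥ y)) := by
  set g : ℕ → ℝ := fun i => y (p.getVert i) - y (p.getVert (i + 1))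
  have htelescope : ∑ i ∈ range p.length, g i = y u - y v := by
    simpa [g] using sum_range_sub' (fun i => y (p.getVert i)) p.length
  have hpath := hp.sum_getVert_le_sum_adj (fun i j => (y i - y j) ^ 2) fun _ _ => sq_nonneg _
  rw [← toLinearMap₂'_apply', lapMatrix_toLinearMap₂', ← htelescope]
  calc (∑ i ∈ range p.length, g i) ^ 2 ≤ p.length * ∑ i ∈ range p.length, g i ^ 2 := by
        simpa using sq_sum_le_card_mul_sum_sq (s := range p.length) (f := g)
    _ ≤ p.length * ((∑ i, ∑ j, if G.Adj i j then (y i - y j) ^ 2 else 0) / 2) := by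
        gcongr
        rw [le_div_iff₀ two_pos, sum_mul]
        exact (sum_congr rfl fun i _ => by ring).trans_le hpath

lemma Connected.two_mul_sq_le {D : ℕ} (hG : G.Connected) (hD : ∀ u v, G.dist u v ≤ D)
    {y : V → ℝ} (hy : 0 ≤ y) {a b : V} (hab : G.Adj a b) (w : V) :
    2 * y w ^ 2 ≤ (2 * D + 1) * (y ⬝ᵥ (G.lapMatrix ℝ *ᵥ y) + 2 * (y a * y b)) := by
  obtain ⟨c, hca, hcb⟩ : ∃ c, y c ≤ y a ∧ y c ≤ y b := by
    rcases le_total (y a) (y b) with h | h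
    · exact ⟨a, le_rfl, h⟩
    · exact ⟨b, h, le_rfl⟩
  obtain ⟨p, hp, hlen⟩ := hG.exists_path_of_dist w c
  have hD0 : (0 : ℝ) < D := by
    have := hD a b
    rw [dist_eq_one_iff_adj.mpr hab] at this
    exact_mod_cast this
  refine two_mul_sq_le_of_sq_sub_le hD0 (s := y c) ?_ ?_
  · rw [sq]
    exact mul_le_mul hca hcb (hy c) ((hy c).trans hca)
  · calc (y w - y c) ^ 2 ≤ p.length * (y ⬝ᵥ (G.lapMatrix ℝ *ᵥ y)) :=
          hp.sq_sub_le_length_mul y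
      _ ≤ D * (y ⬝ᵥ (G.lapMatrix ℝ *ᵥ y)) := by
        have hL : 0 ≤ y ⬝ᵥ (G.lapMatrix ℝ *ᵥ y) := by
          simpa using (posSemidef_lapMatrix ℝ G).dotProduct_mulVec_nonneg y
        gcongr
        rw [hlen]
        exact_mod_cast hD w c

end SimpleGraph

theorem stmt11_general {n r : ℕ} (G : SimpleGraph (Fin n)) (hG : G.Connected)
    [DecidableRel G.Adj] (hreg : G.IsRegularOfDegree r)
    (D : ℕ) (hD1 : ∀ u v, G.dist u v ≤ D)
    (H : SimpleGraph (Fin n)) (hHG : H ≤ G) (hne : H ≠ G)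
    (μG μH : ℝ) (hmaxG : IsMaxAdjEigenvalue (adjMat G) μG)
    (hmaxH : IsMaxAdjEigenvalue (adjMat H) μH) :
    μG - μH > 1 / (n * (D + 1)) := by
  classical
  obtain ⟨a, b, hab, hnab⟩ : ∃ a b, G.Adj a b ∧ ¬H.Adj a b := by
    by_contra! h
    exact hne (le_antisymm hHG fun a b => h a b)
  have : Nonempty (Fin n) := ⟨a⟩
  have hrμG : (r : ℝ) ≤ μG := hmaxG.2 _ (isAdjEigenvalue_adjMat_of_isRegularOfDegree hreg)
  obtain ⟨x, hx0, hx⟩ := hmaxH.1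
  rw [adjMat_eq_adjMatrix] at hx
  have hgap := hreg.dotProduct_lapMatrix_abs_add_le hHG hab hnab hx
  obtain ⟨w, hw⟩ := Finite.exists_max |x|
  have hxw : 0 < |x| w := by
    obtain ⟨i, hi⟩ := Function.ne_iff.mp hx0
    exact (abs_pos.mpr hi).trans_le (hw i)
  have hpath := hG.two_mul_sq_le hD1 (abs_nonneg x) hab w
  have hnorm : |x| ⬝ᵥ |x| ≤ n * |x| w ^ 2 := by
    simpa only [Fintype.card_fin] using dotProduct_self_le_card_mul_sq (abs_nonneg x) hw
  have hlt := one_div_lt_of_two_mul_le (δ := r - μH) (S := |x| ⬝ᵥ |x|)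
    (Nat.cast_pos.mpr a.pos) D.cast_nonneg (by positivity)
    (sum_nonneg fun i _ => mul_self_nonneg (|x| i)) hnorm
    (hpath.trans (by gcongr))
  linarith

theorem stmt11 {n r : ℕ} (G : SimpleGraph (Fin n)) (hG : G.Connected)
    [DecidableRel G.Adj] (hreg : G.IsRegularOfDegree r)
    (D : ℕ) (hD1 : ∀ u v, G.dist u v ≤ D) (hD2 : ∃ u v, G.dist u v = D)
    (H : SimpleGraph (Fin n)) (hHG : H ≤ G) (hne : H ≠ G)
    (μG μH : ℝ) (hmaxG : IsMaxAdjEigenvalue (adjMat G) μG)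
    (hmaxH : IsMaxAdjEigenvalue (adjMat H) μH) :
    μG - μH > 1 / (n * (D + 1)) :=
  stmt11_general G hG hreg D hD1 H hHG hne μG μH hmaxG hmaxH
end
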